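/- (Stability of weighted empirical quantiles under uniform perturbation.) Let α ∈ (0,1), n ≥ 1, w₁, …, w_n ≥ 0 with Σ w_i > 0, δ ≥ 0, and let y, y′ ∈ ℝⁿ with |y_i − y′_i| ≤ δ for all i. Let Q (resp. Q′) be the set of minimizers over θ ∈ ℝ of θ ↦ Σ_{i=1}^n w_i τ_α(y_i − θ) (resp. with y′ in place of y). Then Q and Q′ are nonempty compact intervals, and for every θ ∈ Q there exists θ′ ∈ Q′ with |θ − θ′| ≤ δ, and for every θ′ ∈ Q′ there exists θ ∈ Q with |θ − θ′| ≤ δ (i.e., the Hausdorff distance between Q and Q′ is at most δ). -/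

import Mathlib

/-- The check function `τ_α(u) = u (α − 1{u < 0})`. -/
noncomputable def checkFn (α u : ℝ) : ℝ := u * (α - if u < 0 then 1 else 0)

/-!
With `W = ∑ wᵢ`, both `∑_{yᵢ < θ} wᵢ − αW` and `∑_{yᵢ ≤ θ} wᵢ − αW` are subgradients at `θ` of
the convex loss `L θ = ∑ wᵢ τ_α(yᵢ − θ)`. Conversely, if `αW` lies outside
`[∑_{yᵢ < θ} wᵢ, ∑_{yᵢ ≤ θ} wᵢ]`, a slightly shifted point with no data between it and `θ`
has the same mass as a subgradient there, which makes `L` strictly smaller at it. So the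
minimizers are exactly the `θ` with `∑_{yᵢ < θ} wᵢ ≤ αW ≤ ∑_{yᵢ ≤ θ} wᵢ`. The two conditions
are monotone in `θ`, so the minimizers form an interval; it is compact because `L` is
continuous and, for `0 < α < 1`, no minimizer lies outside the range of the data.
Moving every `yᵢ` by at most `δ` turns a minimizer `θ` for `y` into a point `θ + δ` satisfying
the right-hand condition and a point `θ − δ` satisfying the left-hand one for `y'`, which forces
the interval of minimizers for `y'` to meet `[θ − δ, θ + δ]`.
-/

open Finset

lemma checkFn_eq_mul_add_max (α u : ℝ) : checkFn α u = α * u + max (-u) 0 := by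
  unfold checkFn
  split_ifs with hu
  · rw [max_eq_left (by linarith)]; ring
  · rw [max_eq_right (by linarith)]; ring

lemma continuous_checkFn (α : ℝ) : Continuous (checkFn α) := by
  simp_rw [funext (checkFn_eq_mul_add_max α)]
  fun_prop

lemma checkFn_add_mul_le (α : ℝ) {u : ℝ} (t : ℝ) {c : Prop} [Decidable c] (hneg : u < 0 → c)
    (hnonpos : c → u ≤ 0) :
    checkFn α u + t * ((if c then 1 else 0) - α) ≤ checkFn α (u - t) := by
  unfold checkFn
  by_cases hc : c
  · have := hnonpos hc
    split_ifs <;> nlinarith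
  · have := mt hneg hc
    split_ifs <;> nlinarith

lemma exists_pos_forall_eq_of_abs_sub_lt {ι : Type*} [Finite ι] (y : ι → ℝ) (θ : ℝ) :
    ∃ ε > 0, ∀ i, |y i - θ| < ε → y i = θ := by
  have hopen : IsOpen (Set.range y \ {θ})ᶜ := ((Set.finite_range y).sdiff).isClosed.isOpen_compl
  obtain ⟨ε, hε, hball⟩ := Metric.isOpen_iff.1 hopen θ (by simp)
  refine ⟨ε, hε, fun i hi => by_contra fun hne => hball ?_ ⟨⟨i, rfl⟩, hne⟩⟩
  rwa [Metric.mem_ball, Real.dist_eq]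

section

variable {ι : Type*} [Fintype ι]

lemma sum_filter_le_sum_filter_of_imp {w : ι → ℝ} (hw : ∀ i, 0 ≤ w i) {p q : ι → Prop}
    [DecidablePred p] [DecidablePred q] (h : ∀ i, p i → q i) :
    ∑ i with p i, w i ≤ ∑ i with q i, w i :=
  sum_le_sum_of_subset_of_nonneg (monotone_filter_right _ fun i _ => h i) fun i _ _ => hw i

lemma abs_le_sum_abs (y : ι → ℝ) (i : ι) : |y i| ≤ ∑ j, |y j| :=
  single_le_sum (fun j _ => abs_nonneg (y j)) (mem_univ i)

noncomputable def quantileLoss (α : ℝ) (w y : ι → ℝ) (θ : ℝ) : ℝ :=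
  ∑ i, w i * checkFn α (y i - θ)

def weightedQuantiles (α : ℝ) (w y : ι → ℝ) : Set ℝ :=
  {θ | ∀ θ', quantileLoss α w y θ ≤ quantileLoss α w y θ'}

variable {α : ℝ} {w y : ι → ℝ}

lemma continuous_quantileLoss : Continuous (quantileLoss α w y) := by
  unfold quantileLoss
  have := continuous_checkFn α
  fun_prop

lemma isClosed_weightedQuantiles : IsClosed (weightedQuantiles α w y) := by
  rw [weightedQuantiles, Set.ofPred_forall]
  exact isClosed_iInter fun θ' => isClosed_le continuous_quantileLoss continuous_const

lemma quantileLoss_add_mul_le (hw : ∀ i, 0 ≤ w i) {θ : ℝ} {s : ι → Prop} [DecidablePred s]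
    (hlt : ∀ i, y i < θ → s i) (hle : ∀ i, s i → y i ≤ θ) (θ' : ℝ) :
    quantileLoss α w y θ + (θ' - θ) * (∑ i with s i, w i - α * ∑ i, w i)
      ≤ quantileLoss α w y θ' := calc
  _ = ∑ i, w i * (checkFn α (y i - θ) + (θ' - θ) * ((if s i then 1 else 0) - α)) := by
    simp only [quantileLoss, sum_filter, mul_sum, ← sum_add_distrib, ← sum_sub_distrib]
    refine sum_congr rfl fun i _ => ?_
    split_ifs <;> ring
  _ ≤ _ := by
    refine sum_le_sum fun i _ => mul_le_mul_of_nonneg_left ?_ (hw i)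
    rw [show y i - θ' = y i - θ - (θ' - θ) by ring]
    exact checkFn_add_mul_le α _ (fun h => hlt i (by linarith)) (fun h => by linarith [hle i h])

theorem mem_weightedQuantiles_iff (hw : ∀ i, 0 ≤ w i) {θ : ℝ} :
    θ ∈ weightedQuantiles α w y ↔
      ∑ i with y i < θ, w i ≤ α * ∑ i, w i ∧ α * ∑ i, w i ≤ ∑ i with y i ≤ θ, w i := by
  constructor
  · intro hθ
    obtain ⟨ε, hε, hgap⟩ := exists_pos_forall_eq_of_abs_sub_lt y θ
    constructor
    · by_contra! hmass
      have := quantileLoss_add_mul_le (α := α) (y := y) (θ := θ - ε / 2) (s := (y · < θ)) hw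
        (fun i hi => by linarith) (fun i hi => ?_) θ
      · nlinarith [hθ (θ - ε / 2)]
      · by_contra! hfar
        exact hi.ne (hgap i (abs_lt.2 ⟨by linarith, by linarith⟩))
    · by_contra! hmass
      have := quantileLoss_add_mul_le (α := α) (y := y) (θ := θ + ε / 2) (s := (y · ≤ θ)) hw
        (fun i hi => ?_) (fun i hi => by linarith) θ
      · nlinarith [hθ (θ + ε / 2)]
      · by_contra! hfar
        exact hfar.ne' (hgap i (abs_lt.2 ⟨by linarith, by linarith⟩))
  · rintro ⟨hlt, hle⟩ θ'
    rcases le_total θ θ' with hθθ' | hθ'θ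
    · nlinarith [quantileLoss_add_mul_le (α := α) (s := (y · ≤ θ)) hw
        (fun i hi => hi.le) (fun i hi => hi) θ']
    · nlinarith [quantileLoss_add_mul_le (α := α) (s := (y · < θ)) hw
        (fun i hi => hi) (fun i hi => hi.le) θ']

lemma weightedQuantiles_nonempty (hα₀ : 0 ≤ α) (hα₁ : α ≤ 1) (hw : ∀ i, 0 ≤ w i) :
    (weightedQuantiles α w y).Nonempty := by
  set R := ∑ i, |y i|
  have hR := abs_le_sum_abs y
  have hR₀ : 0 ≤ R := sum_nonneg fun i _ => abs_nonneg (y i)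
  have hW : 0 ≤ ∑ i, w i := sum_nonneg fun i _ => hw i
  obtain ⟨θ₀, -, hθ₀⟩ := isCompact_Icc.exists_isMinOn (Set.nonempty_Icc.2 (neg_le_self hR₀))
    (continuous_quantileLoss (α := α) (w := w) (y := y)).continuousOn
  refine ⟨θ₀, fun θ' => ?_⟩
  rcases lt_or_ge θ' (-R) with hθ' | hθ'
  · have := quantileLoss_add_mul_le (α := α) (y := y) (θ := -R) (s := fun _ => False) hw
      (fun i hi => by linarith [(abs_le.1 (hR i)).1]) (fun i hi => hi.elim) θ'
    simp only [filter_false, sum_empty] at this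
    calc quantileLoss α w y θ₀ ≤ quantileLoss α w y (-R) :=
          isMinOn_iff.1 hθ₀ _ (Set.left_mem_Icc.2 (neg_le_self hR₀))
      _ ≤ _ := le_add_of_nonneg_right (mul_nonneg_of_nonpos_of_nonpos (by linarith)
          (by nlinarith))
      _ ≤ _ := this
  rcases le_or_gt θ' R with hθ'' | hθ''
  · exact hθ₀ ⟨hθ', hθ''⟩
  · have := quantileLoss_add_mul_le (α := α) (y := y) (θ := R) (s := fun _ => True) hw
      (fun _ _ => trivial) (fun i hi => (abs_le.1 (hR i)).2) θ'
    simp only [filter_true] at this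
    calc quantileLoss α w y θ₀ ≤ quantileLoss α w y R :=
          isMinOn_iff.1 hθ₀ _ (Set.right_mem_Icc.2 (neg_le_self hR₀))
      _ ≤ _ := le_add_of_nonneg_right (mul_nonneg (by linarith) (by nlinarith))
      _ ≤ _ := this

lemma weightedQuantiles_subset_Icc (hα : α ∈ Set.Ioo 0 1) (hw : ∀ i, 0 ≤ w i)
    (hwsum : 0 < ∑ i, w i) :
    weightedQuantiles α w y ⊆ Set.Icc (-∑ i, |y i|) (∑ i, |y i|) := by
  intro θ hθ
  obtain ⟨hlt, hle⟩ := (mem_weightedQuantiles_iff hw).1 hθ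
  have hR := abs_le_sum_abs y
  constructor
  · by_contra! hθR
    have : ∑ i with y i ≤ θ, w i ≤ ∑ i with False, w i :=
      sum_filter_le_sum_filter_of_imp hw fun i hi => by linarith [(abs_le.1 (hR i)).1]
    rw [filter_false, sum_empty] at this
    nlinarith [hα.1]
  · by_contra! hθR
    have : ∑ i with True, w i ≤ ∑ i with y i < θ, w i :=
      sum_filter_le_sum_filter_of_imp hw fun i _ => by linarith [(abs_le.1 (hR i)).2]
    rw [filter_true] at this
    nlinarith [hα.2]

lemma ordConnected_weightedQuantiles (hw : ∀ i, 0 ≤ w i) :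
    (weightedQuantiles α w y).OrdConnected := by
  refine ⟨fun a ha b hb θ hθ => (mem_weightedQuantiles_iff hw).2 ⟨?_, ?_⟩⟩
  · exact (sum_filter_le_sum_filter_of_imp hw fun i hi => hi.trans_le hθ.2).trans
      ((mem_weightedQuantiles_iff hw).1 hb).1
  · exact ((mem_weightedQuantiles_iff hw).1 ha).2.trans
      (sum_filter_le_sum_filter_of_imp hw fun i hi => hi.trans hθ.1)

theorem exists_weightedQuantiles_eq_Icc (hα : α ∈ Set.Ioo 0 1) (hw : ∀ i, 0 ≤ w i)
    (hwsum : 0 < ∑ i, w i) :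
    ∃ p q, p ≤ q ∧ weightedQuantiles α w y = Set.Icc p q := by
  have hne := weightedQuantiles_nonempty (y := y) hα.1.le hα.2.le hw
  have hcompact := isCompact_Icc.of_isClosed_subset (isClosed_weightedQuantiles (y := y))
    (weightedQuantiles_subset_Icc hα hw hwsum)
  have hconn : IsConnected (weightedQuantiles α w y) :=
    ⟨hne, isPreconnected_iff_ordConnected.2 (ordConnected_weightedQuantiles hw)⟩
  have hIcc := eq_Icc_of_connected_compact hconn hcompact
  exact ⟨_, _, Set.nonempty_Icc.1 (hIcc ▸ hne), hIcc⟩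

lemma left_le_of_weightedQuantiles_eq_Icc (hw : ∀ i, 0 ≤ w i) {p q : ℝ} (hpq : p ≤ q)
    (hM : weightedQuantiles α w y = Set.Icc p q) {t : ℝ}
    (ht : α * ∑ i, w i ≤ ∑ i with y i ≤ t, w i) : p ≤ t := by
  by_contra! htp
  have hp := ((mem_weightedQuantiles_iff hw).1 (hM ▸ Set.left_mem_Icc.2 hpq)).1
  have ht' : t ∈ weightedQuantiles α w y := (mem_weightedQuantiles_iff hw).2
    ⟨(sum_filter_le_sum_filter_of_imp hw fun i hi => hi.trans htp).trans hp, ht⟩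
  exact htp.not_ge (hM ▸ ht').1

lemma le_right_of_weightedQuantiles_eq_Icc (hw : ∀ i, 0 ≤ w i) {p q : ℝ} (hpq : p ≤ q)
    (hM : weightedQuantiles α w y = Set.Icc p q) {t : ℝ}
    (ht : ∑ i with y i < t, w i ≤ α * ∑ i, w i) : t ≤ q := by
  by_contra! hqt
  have hq := ((mem_weightedQuantiles_iff hw).1 (hM ▸ Set.right_mem_Icc.2 hpq)).2
  have ht' : t ∈ weightedQuantiles α w y := (mem_weightedQuantiles_iff hw).2
    ⟨ht, hq.trans (sum_filter_le_sum_filter_of_imp hw fun i hi => hi.trans hqt.le)⟩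
  exact hqt.not_ge (hM ▸ ht').2

theorem exists_mem_weightedQuantiles_abs_sub_le (hα : α ∈ Set.Ioo 0 1) (hw : ∀ i, 0 ≤ w i)
    (hwsum : 0 < ∑ i, w i) {δ : ℝ} (hδ : 0 ≤ δ) {y' : ι → ℝ} (h : ∀ i, |y i - y' i| ≤ δ)
    {θ : ℝ} (hθ : θ ∈ weightedQuantiles α w y) :
    ∃ θ' ∈ weightedQuantiles α w y', |θ - θ'| ≤ δ := by
  obtain ⟨p, q, hpq, hM⟩ := exists_weightedQuantiles_eq_Icc (y := y') hα hw hwsum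
  obtain ⟨hlt, hle⟩ := (mem_weightedQuantiles_iff hw).1 hθ
  have hp : p ≤ θ + δ := left_le_of_weightedQuantiles_eq_Icc hw hpq hM <|
    hle.trans (sum_filter_le_sum_filter_of_imp hw fun i hi => by linarith [(abs_le.1 (h i)).1])
  have hq : θ - δ ≤ q := le_right_of_weightedQuantiles_eq_Icc hw hpq hM <|
    (sum_filter_le_sum_filter_of_imp hw fun i hi => by linarith [(abs_le.1 (h i)).2]).trans hlt
  refine ⟨max p (θ - δ), hM ▸ ⟨le_max_left _ _, max_le hpq hq⟩, abs_le.2 ⟨?_, ?_⟩⟩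
  · linarith [max_le hp (by linarith : θ - δ ≤ θ + δ)]
  · linarith [le_max_right p (θ - δ)]

end

theorem weighted_quantile_stability_general
    (α : ℝ) (hα : α ∈ Set.Ioo (0 : ℝ) 1)
    (n : ℕ) (w : Fin n → ℝ)
    (hw : ∀ i, 0 ≤ w i) (hwsum : 0 < ∑ i, w i)
    (δ : ℝ) (hδ : 0 ≤ δ) (y y' : Fin n → ℝ) (h : ∀ i, |y i - y' i| ≤ δ) :
    (∃ p q : ℝ, p ≤ q ∧
        {θ : ℝ | ∀ θ' : ℝ, ∑ i, w i * checkFn α (y i - θ) ≤ ∑ i, w i * checkFn α (y i - θ')}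
          = Set.Icc p q) ∧
    (∃ p q : ℝ, p ≤ q ∧
        {θ : ℝ | ∀ θ' : ℝ, ∑ i, w i * checkFn α (y' i - θ) ≤ ∑ i, w i * checkFn α (y' i - θ')}
          = Set.Icc p q) ∧
    (∀ θ, (∀ θ' : ℝ, ∑ i, w i * checkFn α (y i - θ) ≤ ∑ i, w i * checkFn α (y i - θ')) →
        ∃ θ'', (∀ θ' : ℝ, ∑ i, w i * checkFn α (y' i - θ'') ≤ ∑ i, w i * checkFn α (y' i - θ'))
          ∧ |θ - θ''| ≤ δ) ∧
    (∀ θ'', (∀ θ' : ℝ, ∑ i, w i * checkFn α (y' i - θ'') ≤ ∑ i, w i * checkFn α (y' i - θ')) →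
        ∃ θ, (∀ θ' : ℝ, ∑ i, w i * checkFn α (y i - θ) ≤ ∑ i, w i * checkFn α (y i - θ'))
          ∧ |θ - θ''| ≤ δ) := by
  refine ⟨exists_weightedQuantiles_eq_Icc hα hw hwsum,
    exists_weightedQuantiles_eq_Icc hα hw hwsum,
    fun θ hθ => exists_mem_weightedQuantiles_abs_sub_le hα hw hwsum hδ h hθ, fun θ'' hθ'' => ?_⟩
  obtain ⟨θ, hθ, hdist⟩ := exists_mem_weightedQuantiles_abs_sub_le hα hw hwsum hδ
    (fun i => abs_sub_comm (y i) (y' i) ▸ h i) hθ''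
  exact ⟨θ, hθ, abs_sub_comm θ'' θ ▸ hdist⟩

/-- Stability of weighted empirical quantiles under uniform perturbation: the sets of
minimizers of `θ ↦ Σ wᵢ τ_α(yᵢ − θ)` and `θ ↦ Σ wᵢ τ_α(y′ᵢ − θ)` are nonempty compact
intervals at Hausdorff distance at most `δ` whenever `|yᵢ − y′ᵢ| ≤ δ` for all `i`. -/
theorem weighted_quantile_stability
    (α : ℝ) (hα : α ∈ Set.Ioo (0 : ℝ) 1)
    (n : ℕ) (hn : 1 ≤ n) (w : Fin n → ℝ)
    (hw : ∀ i, 0 ≤ w i) (hwsum : 0 < ∑ i, w i)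
    (δ : ℝ) (hδ : 0 ≤ δ) (y y' : Fin n → ℝ) (h : ∀ i, |y i - y' i| ≤ δ) :
    (∃ p q : ℝ, p ≤ q ∧
        {θ : ℝ | ∀ θ' : ℝ, ∑ i, w i * checkFn α (y i - θ) ≤ ∑ i, w i * checkFn α (y i - θ')}
          = Set.Icc p q) ∧
    (∃ p q : ℝ, p ≤ q ∧
        {θ : ℝ | ∀ θ' : ℝ, ∑ i, w i * checkFn α (y' i - θ) ≤ ∑ i, w i * checkFn α (y' i - θ')}
          = Set.Icc p q) ∧
    (∀ θ, (∀ θ' : ℝ, ∑ i, w i * checkFn α (y i - θ) ≤ ∑ i, w i * checkFn α (y i - θ')) →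
        ∃ θ'', (∀ θ' : ℝ, ∑ i, w i * checkFn α (y' i - θ'') ≤ ∑ i, w i * checkFn α (y' i - θ'))
          ∧ |θ - θ''| ≤ δ) ∧
    (∀ θ'', (∀ θ' : ℝ, ∑ i, w i * checkFn α (y' i - θ'') ≤ ∑ i, w i * checkFn α (y' i - θ')) →
        ∃ θ, (∀ θ' : ℝ, ∑ i, w i * checkFn α (y i - θ) ≤ ∑ i, w i * checkFn α (y i - θ'))
          ∧ |θ - θ''| ≤ δ) :=
  weighted_quantile_stability_general α hα n w hw hwsum δ hδ y y' h
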